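/- Under the stated assumptions, limsup_{N→∞} ∫_{1/2+√ε}^{3/2+ε} (1/N)·#{n ≤ N : g_n ∈ (x, 3/2+ε)} dx ≤ ∫_{1/2+√ε}^{3/2+ε} (3/2 + ε − x) dx. -/

import Mathlib

/-!
Each consecutive pair `(n, n + 1)` with `n ≤ N` is one of the pairs `(i, j)`, `i, j ≤ N + 1`, counted
by the pair correlation of `(x, L)`, `L = 3/2 + ε`. Hence the gap proportion
`#{n ≤ N : g n ∈ (x, L)} / N` is at most `(1 + 1/N)` times the pair correlation ratio at level
`N + 1`, which tends to `L - x` by PPC. Those ratios are antitone in `x`, so they are uniformly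
bounded on `[1/2 + √ε, L]` by their values at the endpoints, and dominated convergence carries
the pointwise limit through the integral.
-/

open Finset Filter MeasureTheory Topology

theorem tendsto_intervalIntegral_of_antitone {q : ℕ → ℝ → ℝ} {h : ℝ → ℝ} {a b : ℝ}
    (hab : a ≤ b) (hq : ∀ M, Antitone (q M))
    (hlim : ∀ x ∈ Set.Icc a b, Tendsto (fun M => q M x) atTop (𝓝 (h x))) :
    Tendsto (fun M => ∫ x in a..b, q M x) atTop (𝓝 (∫ x in a..b, h x)) := by
  have hbound_a := ((hlim a ⟨le_rfl, hab⟩).abs).eventually_lt_const (lt_add_one |h a|)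
  have hbound_b := ((hlim b ⟨hab, le_rfl⟩).abs).eventually_lt_const (lt_add_one |h b|)
  refine intervalIntegral.tendsto_integral_filter_of_dominated_convergence
    (fun _ => max (|h a| + 1) (|h b| + 1))
    (Eventually.of_forall fun M => (hq M).measurable.aestronglyMeasurable) ?_
    intervalIntegrable_const (ae_of_all _ fun x hx => ?_)
  · filter_upwards [hbound_a, hbound_b] with M hMa hMb
    refine ae_of_all _ fun x hx => ?_
    rw [Set.uIoc_of_le hab] at hx
    calc ‖q M x‖ ≤ max |q M b| |q M a| := abs_le_max_abs_abs (hq M hx.2) (hq M hx.1.le)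
      _ ≤ max (|h a| + 1) (|h b| + 1) := by
        rw [max_comm]; exact max_le_max hMa.le hMb.le
  · rw [Set.uIoc_of_le hab] at hx
    exact hlim x (Set.Ioc_subset_Icc_self hx)

theorem limsup_le_of_eventually_le_of_tendsto {u v : ℕ → ℝ} {c ℓ : ℝ} (hu : ∀ n, c ≤ u n)
    (huv : ∀ᶠ n in atTop, u n ≤ v n) (hv : Tendsto v atTop (𝓝 ℓ)) :
    limsup u atTop ≤ ℓ :=
  hv.limsup_eq ▸ limsup_le_limsup huv (isCoboundedUnder_le_of_le _ hu) hv.isBoundedUnder_le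

section Counting

variable (lam : ℕ → ℝ)

-- Elaborated under `Classical` like the PPC hypothesis, so that it unfolds to that count verbatim.
open scoped Classical in
noncomputable def pairCount (I : Set ℝ) (N : ℕ) : ℕ :=
  #{p ∈ Icc 1 N ×ˢ Icc 1 N | p.1 ≠ p.2 ∧ lam p.2 - lam p.1 ∈ I}

theorem pairCount_mono {I J : Set ℝ} (hIJ : I ⊆ J) (N : ℕ) :
    pairCount lam I N ≤ pairCount lam J N := by
  classical
  exact card_le_card <| monotone_filter_right _ fun _ _ hp => ⟨hp.1, hIJ hp.2⟩

variable {lam}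

theorem card_filter_gap_le_pairCount {g : ℕ → ℝ} (hg : ∀ n, g n = lam (n + 1) - lam n)
    (I : Set ℝ) [DecidablePred (· ∈ I)] (N : ℕ) :
    #{n ∈ Icc 1 N | g n ∈ I} ≤ pairCount lam I (N + 1) := by
  refine card_le_card_of_injOn (fun n => (n, n + 1)) (fun n hn => ?_) fun m _ n _ h => ?_
  · simp only [mem_coe, mem_filter, mem_Icc, hg] at hn
    simp only [mem_coe, mem_filter, mem_product, mem_Icc]
    exact ⟨⟨⟨hn.1.1, by omega⟩, by omega, by omega⟩, by omega, hn.2⟩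
  · exact (Prod.mk.inj h).1

theorem card_filter_gap_div_le {g : ℕ → ℝ} (hg : ∀ n, g n = lam (n + 1) - lam n)
    (I : Set ℝ) [DecidablePred (· ∈ I)] (N : ℕ) :
    (#{n ∈ Icc 1 N | g n ∈ I} : ℝ) / N ≤
      (1 + 1 / N) * ((pairCount lam I (N + 1) : ℝ) / (N + 1 : ℕ)) := by
  have hcount : (#{n ∈ Icc 1 N | g n ∈ I} : ℝ) ≤ pairCount lam I (N + 1) := by
    exact_mod_cast card_filter_gap_le_pairCount hg I N
  rcases N.eq_zero_or_pos with rfl | hN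
  · simp
  · have hN' : (0 : ℝ) < N := by exact_mod_cast hN
    calc (#{n ∈ Icc 1 N | g n ∈ I} : ℝ) / N ≤ pairCount lam I (N + 1) / N := by gcongr
      _ = _ := by field_simp; push_cast; ring

end Counting

open scoped Classical in
theorem stmt_15_general (lam : ℕ → ℝ) (g : ℕ → ℝ) (hgdef : ∀ n, g n = lam (n + 1) - lam n)
    (hppc : ∀ I : Set ℝ, I.OrdConnected → Bornology.IsBounded I →
      Tendsto (fun N : ℕ =>
          (((Finset.Icc 1 N ×ˢ Finset.Icc 1 N).filter
            (fun p => p.1 ≠ p.2 ∧ lam p.2 - lam p.1 ∈ I)).card : ℝ) / N)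
        atTop (nhds (MeasureTheory.volume I).toReal))
    (ε : ℝ) (hε : ε = 1 / 10 ^ 9) :
    Filter.limsup (fun N : ℕ =>
        ∫ x in (1 / 2 + Real.sqrt ε)..(3 / 2 + ε),
          (((Finset.Icc 1 N).filter
            (fun n => g n ∈ Set.Ioo x (3 / 2 + ε))).card : ℝ) / N) atTop
      ≤ ∫ x in (1 / 2 + Real.sqrt ε)..(3 / 2 + ε), (3 / 2 + ε - x) := by
  have haL : 1 / 2 + Real.sqrt ε ≤ 3 / 2 + ε := by
    have : Real.sqrt ε ≤ 1 := Real.sqrt_le_one.2 (by rw [hε]; norm_num)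
    linarith [show 0 < ε by rw [hε]; norm_num]
  set a := 1 / 2 + Real.sqrt ε
  set L := 3 / 2 + ε
  set q : ℕ → ℝ → ℝ := fun M x => (pairCount lam (Set.Ioo x L) M : ℝ) / M
  have hq_anti (M : ℕ) : Antitone (q M) := fun x y hxy => by
    have := pairCount_mono lam (Set.Ioo_subset_Ioo_left (b := L) hxy) M
    exact div_le_div_of_nonneg_right (by exact_mod_cast this) (Nat.cast_nonneg _)
  have hq_lim : ∀ x ∈ Set.Icc a L, Tendsto (fun M => q M x) atTop (𝓝 (L - x)) := by
    intro x hx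
    have := hppc (Set.Ioo x L) Set.ordConnected_Ioo (Metric.isBounded_Ioo x L)
    rwa [Real.volume_Ioo, ENNReal.toReal_ofReal (sub_nonneg.2 hx.2)] at this
  have hF_anti (N : ℕ) : Antitone fun x => (#{n ∈ Icc 1 N | g n ∈ Set.Ioo x L} : ℝ) / N :=
    fun x y hxy => by
      have := card_le_card <| monotone_filter_right (Icc 1 N) fun n _ (hn : g n ∈ Set.Ioo y L) =>
        Set.Ioo_subset_Ioo_left hxy hn
      exact div_le_div_of_nonneg_right (by exact_mod_cast this) (Nat.cast_nonneg _)
  have hupper : Tendsto (fun N : ℕ => (1 + 1 / (N : ℝ)) * ∫ x in a..L, q (N + 1) x) atTop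
      (𝓝 (∫ x in a..L, (L - x))) := by
    simpa using (tendsto_one_div_atTop_nhds_zero_nat.const_add 1).mul
      ((tendsto_intervalIntegral_of_antitone haL hq_anti hq_lim).comp (tendsto_add_atTop_nat 1))
  refine limsup_le_of_eventually_le_of_tendsto (c := 0)
    (fun N => intervalIntegral.integral_nonneg haL fun x _ => by positivity)
    (Eventually.of_forall fun N => ?_) hupper
  rw [← intervalIntegral.integral_const_mul]
  refine intervalIntegral.integral_mono_on haL (hF_anti N).intervalIntegrable
    ((hq_anti _).intervalIntegrable.const_mul _) fun x _ =>
      card_filter_gap_div_le hgdef (Set.Ioo x L) N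

open scoped Classical in
/-- Let `(λ_n)` be strictly increasing with average gap `1` and Poisson pair correlations,
let `ε = 10⁻⁹`, and suppose `g n := λ_{n+1} − λ_n ≤ 3/2 + ε` for all `n ≥ 1`. Then
`limsup_{N→∞} ∫_{1/2+√ε}^{3/2+ε} (1/N)·#{n ≤ N : g n ∈ (x, 3/2+ε)} dx
  ≤ ∫_{1/2+√ε}^{3/2+ε} (3/2 + ε − x) dx`. -/
theorem stmt_15 (lam : ℕ → ℝ) (g : ℕ → ℝ) (hgdef : ∀ n, g n = lam (n + 1) - lam n)
    (hmono : ∀ n, 1 ≤ n → lam n < lam (n + 1))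
    (havg : Tendsto (fun N : ℕ => (∑ n ∈ Finset.Icc 1 N, g n) / N) atTop (nhds 1))
    (hppc : ∀ I : Set ℝ, I.OrdConnected → Bornology.IsBounded I →
      Tendsto (fun N : ℕ =>
          (((Finset.Icc 1 N ×ˢ Finset.Icc 1 N).filter
            (fun p => p.1 ≠ p.2 ∧ lam p.2 - lam p.1 ∈ I)).card : ℝ) / N)
        atTop (nhds (MeasureTheory.volume I).toReal))
    (ε : ℝ) (hε : ε = 1 / 10 ^ 9)
    (hgap : ∀ n, 1 ≤ n → g n ≤ 3 / 2 + ε) :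
    Filter.limsup (fun N : ℕ =>
        ∫ x in (1 / 2 + Real.sqrt ε)..(3 / 2 + ε),
          (((Finset.Icc 1 N).filter
            (fun n => g n ∈ Set.Ioo x (3 / 2 + ε))).card : ℝ) / N) atTop
      ≤ ∫ x in (1 / 2 + Real.sqrt ε)..(3 / 2 + ε), (3 / 2 + ε - x) :=
  stmt_15_general lam g hgdef hppc ε hε
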